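/- Let φ be a sublinear metric-compatible function and let T ∈ Aut(X,μ) be an aperiodic transformation. Let U ∈ [T]_φ be aperiodic and let A ⊆ X be a measurable subset intersecting almost every U-orbit. Then there exists a sequence (A_k) of measurable subsets of A, each intersecting almost every U-orbit, such that μ(A_k) → 0 and ∫_X φ(|c_{U_{A_k}}(x)|) dμ → 0 as k → ∞, where c_{U_{A_k}} is the T-cocycle of the first return map U_{A_k}. -/

import Mathlib

open MeasureTheory Filter Topology
open scoped ENNReal NNReal

/-- A transformation is aperiodic if almost every orbit is infinite. -/
def Aperiodic {X : Type*} [MeasurableSpace X] (μ : Measure X) (T : X ≃ᵐ X) : Prop :=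
  ∀ᵐ x ∂μ, ∀ n : ℤ, n ≠ 0 → (T.toEquiv ^ n) x ≠ x

/-- A function `φ : ℝ₊ → ℝ₊` is metric-compatible if it is subadditive, non-decreasing,
vanishes exactly at `0`. -/
def MetricCompatible (φ : ℝ≥0 → ℝ≥0) : Prop :=
  (∀ s t, φ (s + t) ≤ φ s + φ t) ∧ Monotone φ ∧ φ 0 = 0 ∧ ∀ t, 0 < t → 0 < φ t

/-- `V` is the first return map of `U` to `A`: a.e., for `x ∈ A`, `V x = Uⁿ x` where `n`
is the first return time of `x` to `A`, and `V x = x` for `x ∉ A`. -/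
def IsFirstReturnMap {X : Type*} [MeasurableSpace X] (μ : Measure X) (U V : X ≃ᵐ X)
    (A : Set X) : Prop :=
  ∀ᵐ x ∂μ, (x ∈ A → ∃ n : ℕ, 0 < n ∧ (U.toEquiv ^ n) x ∈ A ∧
      (∀ m : ℕ, 0 < m → m < n → (U.toEquiv ^ m) x ∉ A) ∧ V x = (U.toEquiv ^ n) x) ∧
    (x ∉ A → V x = x)

/-!
Let `V` be the first return map of `U` to a set `B` meeting almost every orbit. On a conull
invariant set it is a bijection without fixed points on `B`, so a greedy construction along
a countable separating family gives a measurable `C ⊆ B` with `C ∩ V⁻¹ C = ∅` and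
`B ⊆ V⁻¹ C ∪ C ∪ V C`. Then `B \ C` still meets almost every orbit and
`μ (B \ C) ≤ 2/3 μ B`; iterating from `A` gives sets of measure tending to `0`.

The `T`-cocycle of `V` at `x ∈ B` is the sum of `c_U` along the excursion of `x` away
from `B`. Splitting each term at a threshold `M`, subadditivity of `φ` bounds
`φ (|c_V x|)` by the sum of `φ (|c_U|)` over the terms exceeding `M`, plus `φ (M r_B x)`
where `r_B` is the return time. The excursions fill Kakutani's tower over `B`, and
sublinearity gives `φ t ≤ ε t + C_ε`, so with Kac's lemma
`∫ φ (|c_V|) ≤ ∫_{|c_U| > M} φ (|c_U|) + ε M + C_ε μ B`. The first term is small for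
large `M` by dominated convergence, and the last one tends to `0` along the sets above.
-/

namespace Equiv.Perm

variable {X : Type*} (σ : Perm X) (B : Set X)

/-- Equal to `0` off `B` and on points of `B` that never come back (`sInf ∅ = 0`). -/
noncomputable def returnTime (x : X) : ℕ := sInf {n | x ∈ B ∧ 0 < n ∧ (σ ^ n) x ∈ B}

noncomputable def firstReturn (x : X) : X := (σ ^ σ.returnTime B x) x

def ReturnsTo : Prop := ∀ x ∈ B, ∃ n, 0 < n ∧ (σ ^ n) x ∈ B

variable {σ B} {x : X}

theorem returnTime_of_notMem (hx : x ∉ B) : σ.returnTime B x = 0 := by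
  simp [returnTime, hx]

theorem firstReturn_of_notMem (hx : x ∉ B) : σ.firstReturn B x = x := by
  simp [firstReturn, returnTime_of_notMem hx]

theorem mem_of_returnTime_pos (h : 0 < σ.returnTime B x) : x ∈ B := by
  by_contra hx
  simp [returnTime_of_notMem hx] at h

theorem notMem_of_lt_returnTime {m : ℕ} (hm : 0 < m) (hlt : m < σ.returnTime B x) :
    (σ ^ m) x ∉ B :=
  fun hmB => Nat.notMem_of_lt_sInf hlt ⟨mem_of_returnTime_pos (hm.trans hlt), hm, hmB⟩

theorem ReturnsTo.returnTime_pos (h : σ.ReturnsTo B) (hx : x ∈ B) :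
    0 < σ.returnTime B x ∧ (σ ^ σ.returnTime B x) x ∈ B :=
  have ⟨n, hn, hnB⟩ := h x hx
  (Nat.sInf_mem (s := {n | x ∈ B ∧ 0 < n ∧ (σ ^ n) x ∈ B}) ⟨n, hx, hn, hnB⟩).2

theorem ReturnsTo.firstReturn_mem (h : σ.ReturnsTo B) (hx : x ∈ B) : σ.firstReturn B x ∈ B :=
  (h.returnTime_pos hx).2

theorem returnTime_eq {n : ℕ} (hx : x ∈ B) (hn : 0 < n) (hnB : (σ ^ n) x ∈ B)
    (hmin : ∀ m, 0 < m → m < n → (σ ^ m) x ∉ B) : σ.returnTime B x = n := by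
  have hmem := (Nat.sInf_mem (s := {n | x ∈ B ∧ 0 < n ∧ (σ ^ n) x ∈ B}) ⟨n, hx, hn, hnB⟩).2
  exact le_antisymm (Nat.sInf_le ⟨hx, hn, hnB⟩) (not_lt.1 fun hlt => hmin _ hmem.1 hlt hmem.2)

theorem ReturnsTo.lt_returnTime_iff (h : σ.ReturnsTo B) {i : ℕ} :
    i < σ.returnTime B x ↔ x ∈ B ∧ ∀ m, 0 < m → m ≤ i → (σ ^ m) x ∉ B := by
  refine ⟨fun hi => ⟨mem_of_returnTime_pos (i.zero_le.trans_lt hi),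
    fun m hm hmi => notMem_of_lt_returnTime hm (hmi.trans_lt hi)⟩, fun ⟨hx, hmin⟩ => ?_⟩
  obtain ⟨hpos, hmem⟩ := h.returnTime_pos hx
  exact lt_of_not_ge fun hle => hmin _ hpos hle hmem

theorem inv_pow_apply_pow_apply {k n : ℕ} (hk : k ≤ n) (x : X) :
    (σ⁻¹ ^ k) ((σ ^ n) x) = (σ ^ (n - k)) x := by
  obtain ⟨d, rfl⟩ := Nat.exists_eq_add_of_le hk
  rw [pow_add, mul_apply, inv_pow, Nat.add_sub_cancel_left, inv_eq_iff_eq]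

theorem ReturnsTo.inv_firstReturn_firstReturn (h : σ.ReturnsTo B) (x : X) :
    σ⁻¹.firstReturn B (σ.firstReturn B x) = x := by
  by_cases hx : x ∈ B
  · obtain ⟨hpos, hmem⟩ := h.returnTime_pos hx
    have hback : σ⁻¹.returnTime B (σ.firstReturn B x) = σ.returnTime B x := by
      refine returnTime_eq hmem hpos ?_ fun m hm hmn => ?_
      · rwa [firstReturn, inv_pow_apply_pow_apply le_rfl, Nat.sub_self, pow_zero, one_apply]
      · rw [firstReturn, inv_pow_apply_pow_apply hmn.le]
        exact notMem_of_lt_returnTime (by omega) (by omega)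
    rw [firstReturn, hback, firstReturn, inv_pow_apply_pow_apply le_rfl, Nat.sub_self, pow_zero,
      one_apply]
  · rw [firstReturn_of_notMem hx, firstReturn_of_notMem hx]

variable (σ B) in
noncomputable def firstReturnPerm (h₁ : σ.ReturnsTo B) (h₂ : σ⁻¹.ReturnsTo B) : Perm X where
  toFun := σ.firstReturn B
  invFun := σ⁻¹.firstReturn B
  left_inv := h₁.inv_firstReturn_firstReturn
  right_inv y := by simpa using h₂.inv_firstReturn_firstReturn y

theorem eq_of_pow_apply_eq_pow_apply {y : X} {i j : ℕ} (hj : j < σ.returnTime B y)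
    (hx : x ∈ B) (hij : i ≤ j) (h : (σ ^ i) x = (σ ^ j) y) : i = j := by
  have hxy : x = (σ ^ (j - i)) y := by
    rw [← Nat.add_sub_cancel' hij, pow_add, mul_apply] at h
    exact (σ ^ i).injective h
  by_contra hne
  exact notMem_of_lt_returnTime (σ := σ) (by omega) (by omega) (hxy ▸ hx)

theorem pairwise_disjoint_image_pow_lt_returnTime :
    Pairwise (Function.onFun _root_.Disjoint fun i : ℕ =>
      ⇑(σ ^ i) '' {x | i < σ.returnTime B x}) := by
  intro i j hij
  refine Set.disjoint_left.2 ?_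
  rintro _ ⟨x, hx, rfl⟩ ⟨y, hy, hxy⟩
  rcases le_total i j with h | h
  · exact hij (eq_of_pow_apply_eq_pow_apply hy (mem_of_returnTime_pos (i.zero_le.trans_lt hx))
      h hxy.symm)
  · exact hij (eq_of_pow_apply_eq_pow_apply hx (mem_of_returnTime_pos (j.zero_le.trans_lt hy))
      h hxy).symm

theorem pow_apply_eq_zpow_birkhoffSum (τ : Perm X) (c : X → ℤ) {x : X}
    (h : ∀ j : ℕ, σ ((σ ^ j) x) = (τ ^ c ((σ ^ j) x)) ((σ ^ j) x)) (n : ℕ) :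
    (σ ^ n) x = (τ ^ birkhoffSum σ c n x) x := by
  induction n with
  | zero => simp
  | succ n ih =>
    calc (σ ^ (n + 1)) x = (τ ^ c ((σ ^ n) x)) ((σ ^ n) x) := by rw [pow_succ', mul_apply, h]
      _ = (τ ^ (c ((σ ^ n) x) + birkhoffSum σ c n x)) x := by rw [zpow_add, mul_apply, ← ih]
      _ = (τ ^ birkhoffSum σ c (n + 1) x) x := by rw [birkhoffSum_succ, coe_pow, add_comm]

end Equiv.Perm

def tailPart (φ : ℝ≥0 → ℝ≥0) (M : ℕ) (a : ℤ) : ℝ≥0 :=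
  if M < a.natAbs then φ a.natAbs else 0

theorem MetricCompatible.apply_natAbs_sum_le {φ : ℝ≥0 → ℝ≥0} (hφ : MetricCompatible φ)
    {ι : Type*} (s : Finset ι) (a : ι → ℤ) (M : ℕ) :
    φ (∑ i ∈ s, a i).natAbs ≤ ∑ i ∈ s, tailPart φ M (a i) + φ (s.card * M) := by
  obtain ⟨hadd, hmono, hzero, -⟩ := hφ
  set large : ι → ℝ≥0 := fun i => if M < (a i).natAbs then ((a i).natAbs : ℝ≥0) else 0
  set small : ι → ℝ≥0 := fun i => if M < (a i).natAbs then 0 else ((a i).natAbs : ℝ≥0)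
  have hsplit : ((∑ i ∈ s, a i).natAbs : ℝ≥0) ≤ ∑ i ∈ s, large i + ∑ i ∈ s, small i := by
    rw [← Finset.sum_add_distrib]
    calc ((∑ i ∈ s, a i).natAbs : ℝ≥0) ≤ ∑ i ∈ s, ((a i).natAbs : ℝ≥0) := by
          exact_mod_cast Int.natAbs_sum_le s a
      _ = ∑ i ∈ s, (large i + small i) := by
          refine Finset.sum_congr rfl fun i _ => ?_
          simp only [large, small]
          split_ifs <;> simp
  have hsmall : ∑ i ∈ s, small i ≤ s.card * M := by
    calc ∑ i ∈ s, small i ≤ ∑ _i ∈ s, (M : ℝ≥0) := Finset.sum_le_sum fun i _ => by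
          simp only [small]
          split_ifs with h
          · exact zero_le
          · exact_mod_cast not_lt.1 h
      _ = s.card * M := by simp
  have hlarge : ∀ i, φ (large i) = tailPart φ M (a i) := fun i => by
    simp only [large, tailPart]
    split_ifs <;> simp [hzero]
  calc φ (∑ i ∈ s, a i).natAbs ≤ φ (∑ i ∈ s, large i + ∑ i ∈ s, small i) := hmono hsplit
    _ ≤ φ (∑ i ∈ s, large i) + φ (∑ i ∈ s, small i) := hadd _ _
    _ ≤ ∑ i ∈ s, φ (large i) + φ (s.card * M) :=
        add_le_add (Finset.le_sum_of_subadditive φ hzero.le hadd s large) (hmono hsmall)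
    _ = ∑ i ∈ s, tailPart φ M (a i) + φ (s.card * M) := by simp only [hlarge]

open Equiv.Perm in
theorem MetricCompatible.apply_natAbs_birkhoffSum_returnTime_le {φ : ℝ≥0 → ℝ≥0}
    (hφ : MetricCompatible φ) {X : Type*} (σ : Equiv.Perm X) (B : Set X) (c : X → ℤ) (M : ℕ)
    {ε C : ℝ≥0} (hC : ∀ t, φ t ≤ ε * t + C) (x : X) :
    (φ (birkhoffSum σ c (returnTime σ B x) x).natAbs : ℝ≥0∞) ≤
      ∑ i ∈ Finset.range (returnTime σ B x), (tailPart φ M (c ((σ ^ i) x)) : ℝ≥0∞) +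
        (ε * M * returnTime σ B x + B.indicator (fun _ => (C : ℝ≥0∞)) x) := by
  set r := returnTime σ B x
  have hsum := hφ.apply_natAbs_sum_le (Finset.range r) (fun i => c ((σ ^ i) x)) M
  have hrM : (φ (r * M) : ℝ≥0∞) ≤ ε * M * r + B.indicator (fun _ => (C : ℝ≥0∞)) x := by
    by_cases hx : x ∈ B
    · rw [Set.indicator_of_mem hx]
      exact_mod_cast (hC _).trans_eq (by push_cast; ring)
    · simp [r, returnTime_of_notMem hx, hφ.2.2.1]
  simp only [birkhoffSum, ← Equiv.Perm.coe_pow, Finset.card_range] at hsum ⊢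
  calc _ ≤ ((∑ i ∈ Finset.range r, tailPart φ M (c ((σ ^ i) x)) + φ (r * M) : ℝ≥0) : ℝ≥0∞) :=
        ENNReal.coe_le_coe.2 hsum
    _ ≤ _ := by push_cast; gcongr

theorem exists_le_mul_add_of_tendsto_div {φ : ℝ≥0 → ℝ≥0} (hmono : Monotone φ)
    (hsub : Tendsto (fun t => φ t / t) atTop (𝓝 0)) {ε : ℝ≥0} (hε : 0 < ε) :
    ∃ C, ∀ t, φ t ≤ ε * t + C := by
  obtain ⟨t₀, ht₀⟩ := eventually_atTop.1 (hsub.eventually_lt_const hε)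
  refine ⟨φ (max t₀ 1), fun t => ?_⟩
  rcases le_total t (max t₀ 1) with h | h
  · exact (hmono h).trans le_add_self
  · have htpos : 0 < t := zero_lt_one.trans_le ((le_max_right _ _).trans h)
    have := ht₀ t ((le_max_left _ _).trans h)
    rw [div_lt_iff₀ htpos] at this
    exact this.le.trans le_self_add

theorem ENNReal.tendsto_nhds_zero_of_forall_le_add_mul {ι : Type*} {l : Filter ι}
    {f a : ι → ℝ≥0∞} (ha : Tendsto a l (𝓝 0))
    (h : ∀ δ : ℝ≥0, 0 < δ → ∃ C : ℝ≥0, ∀ i, f i ≤ δ + C * a i) : Tendsto f l (𝓝 0) := by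
  refine tendsto_order.2 ⟨fun b hb => absurd hb (ENNReal.not_lt_zero), fun b hb => ?_⟩
  obtain ⟨δ, hδ, hδb⟩ := ENNReal.lt_iff_exists_nnreal_btwn.1 hb
  obtain ⟨C, hC⟩ := h δ (by exact_mod_cast hδ)
  have hlim : Tendsto (fun i => (δ : ℝ≥0∞) + C * a i) l (𝓝 δ) := by
    simpa using tendsto_const_nhds.add (ENNReal.Tendsto.const_mul ha (Or.inr ENNReal.coe_ne_top))
  exact (hlim.eventually (gt_mem_nhds hδb)).mono fun i hi => (hC i).trans_lt hi

theorem exists_seq_tendsto_zero_of_forall_exists_le_mul {α : Type*} {P : α → Prop}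
    (m : α → ℝ≥0∞) {q : ℝ≥0∞} (hq : q < 1) (hstep : ∀ a, P a → ∃ b, P b ∧ m b ≤ q * m a)
    {a₀ : α} (h₀ : P a₀) (hfin : m a₀ ≠ ⊤) :
    ∃ s : ℕ → α, (∀ k, P (s k)) ∧ Tendsto (fun k => m (s k)) atTop (𝓝 0) := by
  choose! next hnextP hnextm using hstep
  have hP : ∀ k, P (next^[k] a₀) := fun k => by
    induction k with
    | zero => exact h₀
    | succ k ih => rw [Function.iterate_succ_apply']; exact hnextP _ ih
  have hm : ∀ k, m (next^[k] a₀) ≤ q ^ k * m a₀ := fun k => by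
    induction k with
    | zero => simp
    | succ k ih =>
      rw [Function.iterate_succ_apply', pow_succ', mul_assoc]
      exact (hnextm _ (hP k)).trans (mul_le_mul_right ih q)
  have hlim : Tendsto (fun k => q ^ k * m a₀) atTop (𝓝 0) := by
    simpa using ENNReal.Tendsto.mul_const (ENNReal.tendsto_pow_atTop_nhds_zero_of_lt_one hq)
      (Or.inr hfin)
  exact ⟨fun k => next^[k] a₀, hP, tendsto_of_tendsto_of_tendsto_of_le_of_le tendsto_const_nhds
    hlim (fun k => zero_le) hm⟩

theorem measure_sdiff_le_two_thirds_mul {X : Type*} [MeasurableSpace X] {μ : Measure X}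
    [IsFiniteMeasure μ] {B C : Set X} (hCB : C ⊆ B) (hC : MeasurableSet C)
    (h3 : μ B ≤ 3 * μ C) : μ (B \ C) ≤ 2 / 3 * μ B := by
  have hthird : μ B / 3 ≤ μ C := by
    rw [ENNReal.div_le_iff (by norm_num) (by norm_num), mul_comm]
    exact h3
  have hsplit : 2 / 3 * μ B + μ B / 3 = μ B := by
    rw [← ENNReal.mul_div_right_comm, ENNReal.div_add_div_same, ← add_one_mul,
      show (2 + 1 : ℝ≥0∞) = 3 by norm_num, mul_comm,
      ENNReal.mul_div_cancel_right (by norm_num) (by norm_num)]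
  calc μ (B \ C) = μ B - μ C := measure_sdiff hCB hC.nullMeasurableSet (measure_ne_top _ _)
    _ ≤ μ B - μ B / 3 := tsub_le_tsub_left hthird _
    _ = 2 / 3 * μ B := ENNReal.sub_eq_of_eq_add (by finiteness) hsplit.symm

section IndependentSet

variable {X : Type*} [MeasurableSpace X] [MeasurableSpace.CountablySeparated X]

theorem exists_seq_measurableSet_cover_of_ne_self {f : X → X} (hf : Measurable f) :
    ∃ D : ℕ → Set X, (∀ n, MeasurableSet (D n)) ∧ (∀ n, ∀ x ∈ D n, f x ∉ D n) ∧
      ∀ x, f x ≠ x → ∃ n, x ∈ D n := by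
  obtain ⟨F, hF, hinj⟩ := MeasurableSpace.measurable_injection_nat_bool_of_countablySeparated X
  -- `n` encodes a bit position `n.div2` of `F` and a bit value `n.bodd`
  refine ⟨fun n => {x | F x n.div2 = n.bodd ∧ F (f x) n.div2 ≠ n.bodd}, fun n => ?_,
    fun n x hx hfx => hx.2 hfx.1, fun x hx => ?_⟩
  · have hbit : Measurable fun x => F x n.div2 := (measurable_pi_apply _).comp hF
    exact (hbit (measurableSet_singleton _)).inter
      ((hbit.comp hf) (measurableSet_singleton _)).compl
  · obtain ⟨k, hk⟩ := Function.ne_iff.1 (hinj.ne hx.symm)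
    exact ⟨Nat.bit (F x k) k, by simpa [Nat.bodd_bit, Nat.div2_bit] using Ne.symm hk⟩

theorem MeasurableEquiv.exists_independent_subset_cover (V : X ≃ᵐ X) {S : Set X}
    (hS : MeasurableSet S) (hne : ∀ x ∈ S, V x ≠ x) :
    ∃ C ⊆ S, MeasurableSet C ∧ (∀ x ∈ C, V x ∉ C) ∧ S ⊆ V ⁻¹' C ∪ C ∪ V.symm ⁻¹' C := by
  obtain ⟨D, hD, hDind, hDcov⟩ := exists_seq_measurableSet_cover_of_ne_self V.measurable
  set nbhd : Set X → Set X := fun C => V ⁻¹' C ∪ C ∪ V.symm ⁻¹' C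
  have hnbhd_mono : Monotone nbhd := fun C C' h =>
    Set.union_subset_union (Set.union_subset_union (Set.preimage_mono h) h) (Set.preimage_mono h)
  set Cs : ℕ → Set X := fun n => Nat.rec ∅ (fun n C => C ∪ ((S ∩ D n) \ nbhd C)) n
  have hsucc : ∀ n, Cs (n + 1) = Cs n ∪ ((S ∩ D n) \ nbhd (Cs n)) := fun n => rfl
  have hCs_mono : Monotone Cs :=
    monotone_nat_of_le_succ fun n => (hsucc n).symm ▸ Set.subset_union_left
  have hCs_sub : ∀ n, Cs n ⊆ S := fun n => by
    induction n with
    | zero => exact Set.empty_subset _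
    | succ n ih => exact (hsucc n).symm ▸ Set.union_subset ih fun x hx => hx.1.1
  have hCs_meas : ∀ n, MeasurableSet (Cs n) := fun n => by
    induction n with
    | zero => exact MeasurableSet.empty
    | succ n ih =>
      rw [hsucc]
      exact ih.union ((hS.inter (hD n)).diff (((V.measurable ih).union ih).union
        (V.symm.measurable ih)))
  have hCs_ind : ∀ n, ∀ x ∈ Cs n, V x ∉ Cs n := fun n => by
    induction n with
    | zero => exact fun x hx => hx.elim
    | succ n ih =>
      rw [hsucc]
      rintro x (hx | hx) (hVx | hVx)
      · exact ih x hx hVx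
      · exact hVx.2 (Or.inr (by simpa using hx))
      · exact hx.2 (Or.inl (Or.inl hVx))
      · exact hDind n x hx.1.2 hVx.1.2
  refine ⟨⋃ n, Cs n, Set.iUnion_subset hCs_sub, .iUnion hCs_meas, ?_, fun x hx => ?_⟩
  · simp only [Set.mem_iUnion]
    rintro x ⟨i, hi⟩ ⟨j, hj⟩
    exact hCs_ind (max i j) x (hCs_mono (le_max_left i j) hi) (hCs_mono (le_max_right i j) hj)
  · obtain ⟨n, hn⟩ := hDcov x (hne x hx)
    by_cases h : x ∈ nbhd (Cs n)
    · exact hnbhd_mono (Set.subset_iUnion Cs n) h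
    · exact Or.inl (Or.inr (Set.mem_iUnion.2 ⟨n + 1, (hsucc n).symm ▸ Or.inr ⟨⟨hx, hn⟩, h⟩⟩))

end IndependentSet

namespace MeasurableEquiv

variable {X : Type*} [MeasurableSpace X] {μ : Measure X}

theorem measurable_toEquiv_pow (U : X ≃ᵐ X) (n : ℕ) : Measurable ⇑(U.toEquiv ^ n) := by
  rw [Equiv.Perm.coe_pow]
  exact U.measurable.iterate n

theorem measurable_toEquiv_zpow (U : X ≃ᵐ X) : ∀ m : ℤ, Measurable ⇑(U.toEquiv ^ m)
  | (n : ℕ) => by simpa using U.measurable_toEquiv_pow n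
  | .negSucc n => by
    rw [zpow_negSucc, ← inv_pow]
    exact U.symm.measurable_toEquiv_pow (n + 1)

def zpow (U : X ≃ᵐ X) (m : ℤ) : X ≃ᵐ X where
  toEquiv := U.toEquiv ^ m
  measurable_toFun := U.measurable_toEquiv_zpow m
  measurable_invFun := by
    show Measurable ⇑(U.toEquiv ^ m)⁻¹
    rw [← zpow_neg]
    exact U.measurable_toEquiv_zpow (-m)

@[simp]
theorem coe_zpow (U : X ≃ᵐ X) (m : ℤ) : ⇑(U.zpow m) = ⇑(U.toEquiv ^ m) := rfl

theorem measurePreserving_zpow {U : X ≃ᵐ X} (hU : MeasurePreserving U μ μ) :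
    ∀ m : ℤ, MeasurePreserving (U.zpow m) μ μ
  | (n : ℕ) => by simpa [Equiv.Perm.coe_pow] using hU.iterate n
  | .negSucc n => by
    rw [coe_zpow, zpow_negSucc, ← inv_pow, Equiv.Perm.coe_pow]
    exact (MeasurePreserving.symm U hU).iterate (n + 1)

theorem measurePreserving_of_eq_apply {V : X ≃ᵐ X} {r : X → ℕ} (hr : Measurable r)
    {g : ℕ → X ≃ᵐ X} (hg : ∀ n, MeasurePreserving (g n) μ μ) (hV : ∀ x, V x = g (r x) x) :
    MeasurePreserving V μ μ := by
  have hfibres : ∀ {f : X → ℕ}, Measurable f → ∀ t, MeasurableSet t →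
      μ t = ∑' n, μ (t ∩ f ⁻¹' {n}) := fun {f} hf t ht => by
    rw [← measure_iUnion (fun i j hij => ((Set.disjoint_singleton.2 hij).preimage f).mono
      Set.inter_subset_right Set.inter_subset_right)
      fun n => ht.inter (hf (measurableSet_singleton n))]
    congr 1
    ext x
    simp
  refine ⟨V.measurable, Measure.ext fun s hs => ?_⟩
  rw [Measure.map_apply V.measurable hs, hfibres hr _ (V.measurable hs),
    hfibres (hr.comp V.symm.measurable) s hs]
  refine tsum_congr fun n => ?_
  have himage : s ∩ (r ∘ V.symm) ⁻¹' {n} = g n '' (V ⁻¹' s ∩ r ⁻¹' {n}) := by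
    ext y
    constructor
    · rintro ⟨hy, hn⟩
      refine ⟨V.symm y, ⟨by simp [hy], hn⟩, ?_⟩
      rw [← Set.mem_singleton_iff.1 hn, Function.comp_apply, ← hV, apply_symm_apply]
    · rintro ⟨x, ⟨hxs, hxn⟩, rfl⟩
      rw [← Set.mem_singleton_iff.1 hxn, ← hV]
      exact ⟨hxs, by simp⟩
  rw [himage, image_eq_preimage_symm, (MeasurePreserving.symm _ (hg n)).measure_preimage_equiv]

end MeasurableEquiv

section ReturnTime

open Equiv.Perm

variable {X : Type*} [MeasurableSpace X] {μ : Measure X} {U : X ≃ᵐ X} {B : Set X}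

theorem measurableSet_lt_returnTime (hB : MeasurableSet B) (h : ReturnsTo U.toEquiv B)
    (i : ℕ) : MeasurableSet {x | i < returnTime U.toEquiv B x} := by
  have : {x | i < returnTime U.toEquiv B x} =
      B ∩ ⋂ (m) (_ : 0 < m) (_ : m ≤ i), ⇑(U.toEquiv ^ m) ⁻¹' Bᶜ := by
    ext x
    simp [h.lt_returnTime_iff]
  rw [this]
  exact hB.inter (.iInter fun m => .iInter fun _ => .iInter fun _ =>
    (U.measurable_toEquiv_pow m hB.compl))

theorem measurable_returnTime (hB : MeasurableSet B) (h : ReturnsTo U.toEquiv B) :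
    Measurable (returnTime U.toEquiv B) :=
  measurable_of_Ioi (measurableSet_lt_returnTime hB h)

theorem measurable_apply_returnTime {Y : Type*} [MeasurableSpace Y] (hB : MeasurableSet B)
    (h : ReturnsTo U.toEquiv B) {g : ℕ → X → Y} (hg : ∀ n, Measurable (g n)) :
    Measurable fun x => g (returnTime U.toEquiv B x) x :=
  (measurable_from_prod_countable_right (f := fun p : ℕ × X => g p.1 p.2) hg).comp
    ((measurable_returnTime hB h).prodMk measurable_id)

/-- The excursions from `B` fill Kakutani's tower over `B`, whose levels are disjoint. -/
theorem lintegral_sum_range_returnTime_le (hU : MeasurePreserving U μ μ)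
    (hB : MeasurableSet B) (h : ReturnsTo U.toEquiv B) {f : X → ℝ≥0∞} (hf : Measurable f) :
    ∫⁻ x, ∑ i ∈ Finset.range (returnTime U.toEquiv B x), f ((U.toEquiv ^ i) x) ∂μ ≤
      ∫⁻ x, f x ∂μ := by
  set L : ℕ → Set X := fun i => {x | i < returnTime U.toEquiv B x}
  have hL : ∀ i, MeasurableSet (L i) := measurableSet_lt_returnTime hB h
  have hsum : ∀ x, ∑ i ∈ Finset.range (returnTime U.toEquiv B x), f ((U.toEquiv ^ i) x) =
      ∑' i, (L i).indicator (fun x => f ((U.toEquiv ^ i) x)) x := fun x => by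
    rw [tsum_eq_sum (s := Finset.range (returnTime U.toEquiv B x))
      fun i hi => Set.indicator_of_notMem (by simpa [L] using hi) _]
    exact Finset.sum_congr rfl fun i hi =>
      (Set.indicator_of_mem (show x ∈ L i from Finset.mem_range.1 hi)
        (fun x => f ((U.toEquiv ^ i) x))).symm
  have hmeas : ∀ i : ℕ, Measurable fun x => f ((U.toEquiv ^ i) x) :=
    fun i => hf.comp (U.measurable_toEquiv_pow i)
  calc ∫⁻ x, ∑ i ∈ Finset.range (returnTime U.toEquiv B x), f ((U.toEquiv ^ i) x) ∂μ
      = ∑' i, ∫⁻ x in L i, f ((U.toEquiv ^ i) x) ∂μ := by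
        simp_rw [hsum]
        rw [lintegral_tsum fun i => ((hmeas i).indicator (hL i)).aemeasurable]
        exact tsum_congr fun i => lintegral_indicator (hL i) _
    _ = ∑' i : ℕ, ∫⁻ y in ⇑(U.toEquiv ^ i) '' L i, f y ∂μ := tsum_congr fun i => by
        simpa using (MeasurableEquiv.measurePreserving_zpow hU i).setLIntegral_comp_emb
          (U.zpow i).measurableEmbedding f (L i)
    _ = ∫⁻ y in ⋃ i : ℕ, ⇑(U.toEquiv ^ i) '' L i, f y ∂μ := by
        refine (lintegral_iUnion (fun i => ?_) pairwise_disjoint_image_pow_lt_returnTime f).symm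
        simpa using (U.zpow i).measurableSet_image.2 (hL i)
    _ ≤ ∫⁻ x, f x ∂μ := setLIntegral_le_lintegral _ _

end ReturnTime

section FirstReturn

open Equiv.Perm MeasurableEquiv

variable {X : Type*} [MeasurableSpace X] {μ : Measure X} {U : X ≃ᵐ X} {B : Set X}

theorem measurable_firstReturn (hB : MeasurableSet B) (h : ReturnsTo U.toEquiv B) :
    Measurable (firstReturn U.toEquiv B) :=
  measurable_apply_returnTime hB h U.measurable_toEquiv_pow

variable (U) in
noncomputable def firstReturnEquiv (hB : MeasurableSet B) (h₁ : ReturnsTo U.toEquiv B)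
    (h₂ : ReturnsTo U.symm.toEquiv B) : X ≃ᵐ X where
  toEquiv := firstReturnPerm U.toEquiv B h₁ h₂
  measurable_toFun := measurable_firstReturn hB h₁
  measurable_invFun := measurable_firstReturn (U := U.symm) hB h₂

theorem coe_firstReturnEquiv (hB : MeasurableSet B) (h₁ : ReturnsTo U.toEquiv B)
    (h₂ : ReturnsTo U.symm.toEquiv B) :
    ⇑(firstReturnEquiv U hB h₁ h₂) = firstReturn U.toEquiv B := rfl

theorem measurePreserving_firstReturnEquiv (hU : MeasurePreserving U μ μ)
    (hB : MeasurableSet B) (h₁ : ReturnsTo U.toEquiv B) (h₂ : ReturnsTo U.symm.toEquiv B) :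
    MeasurePreserving (firstReturnEquiv U hB h₁ h₂) μ μ :=
  measurePreserving_of_eq_apply (measurable_returnTime hB h₁) (g := fun n => U.zpow n)
    (fun n => measurePreserving_zpow hU n) fun x => by simp [coe_firstReturnEquiv, firstReturn]

theorem measurable_birkhoffSum_returnTime (hB : MeasurableSet B) (h : ReturnsTo U.toEquiv B)
    {c : X → ℤ} (hc : Measurable c) :
    Measurable fun x => birkhoffSum U.toEquiv c (returnTime U.toEquiv B x) x :=
  measurable_apply_returnTime hB h fun _ =>
    Finset.measurable_sum _ fun i _ => hc.comp (U.measurable.iterate i)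

theorem ae_firstReturn_eq_zpow_birkhoffSum (hU : MeasurePreserving U μ μ) {T : X ≃ᵐ X}
    {c : X → ℤ} (hc : ∀ᵐ x ∂μ, U x = (T.toEquiv ^ c x) x) :
    ∀ᵐ x ∂μ, firstReturn U.toEquiv B x =
      (T.toEquiv ^ birkhoffSum U.toEquiv c (returnTime U.toEquiv B x) x) x := by
  have horbit : ∀ᵐ x ∂μ, ∀ j : ℕ,
      U ((U.toEquiv ^ j) x) = (T.toEquiv ^ c ((U.toEquiv ^ j) x)) ((U.toEquiv ^ j) x) :=
    ae_all_iff.2 fun j => by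
      simpa using (measurePreserving_zpow hU j).quasiMeasurePreserving.ae hc
  filter_upwards [horbit] with x hx
  exact pow_apply_eq_zpow_birkhoffSum _ _ hx _

/-- Kac's lemma. -/
theorem lintegral_returnTime_le (hU : MeasurePreserving U μ μ) (hB : MeasurableSet B)
    (h : ReturnsTo U.toEquiv B) : ∫⁻ x, (returnTime U.toEquiv B x : ℝ≥0∞) ∂μ ≤ μ Set.univ := by
  simpa using lintegral_sum_range_returnTime_le hU hB h (f := 1) measurable_const

theorem lintegral_birkhoffSum_returnTime_le {φ : ℝ≥0 → ℝ≥0} (hφ : MetricCompatible φ)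
    (hU : MeasurePreserving U μ μ) (hB : MeasurableSet B) (h : ReturnsTo U.toEquiv B)
    {c : X → ℤ} (hc : Measurable c) (M : ℕ) {ε C : ℝ≥0} (hC : ∀ t, φ t ≤ ε * t + C) :
    ∫⁻ x, (φ (birkhoffSum U.toEquiv c (returnTime U.toEquiv B x) x).natAbs : ℝ≥0∞) ∂μ ≤
      ∫⁻ x, (tailPart φ M (c x) : ℝ≥0∞) ∂μ + ε * M * μ Set.univ + C * μ B := by
  set r := returnTime U.toEquiv B
  have htail : Measurable fun x => (tailPart φ M (c x) : ℝ≥0∞) :=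
    (measurable_of_countable fun a => (tailPart φ M a : ℝ≥0∞)).comp hc
  have hr : Measurable fun x => (r x : ℝ≥0∞) :=
    measurable_from_nat.comp (measurable_returnTime hB h)
  have hrest : Measurable fun x => ε * M * (r x : ℝ≥0∞) + B.indicator (fun _ => (C : ℝ≥0∞)) x :=
    (hr.const_mul _).add (measurable_const.indicator hB)
  calc _ ≤ ∫⁻ x, ∑ i ∈ Finset.range (r x), (tailPart φ M (c ((U.toEquiv ^ i) x)) : ℝ≥0∞) +
        (ε * M * r x + B.indicator (fun _ => (C : ℝ≥0∞)) x) ∂μ :=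
      lintegral_mono (hφ.apply_natAbs_birkhoffSum_returnTime_le U.toEquiv B c M hC)
    _ = ∫⁻ x, ∑ i ∈ Finset.range (r x), (tailPart φ M (c ((U.toEquiv ^ i) x)) : ℝ≥0∞) ∂μ +
        (ε * M * ∫⁻ x, (r x : ℝ≥0∞) ∂μ + C * μ B) := by
      rw [lintegral_add_right _ hrest, lintegral_add_left (hr.const_mul _),
        lintegral_const_mul _ hr, lintegral_indicator_const hB]
    _ ≤ _ := by
      rw [add_assoc]
      exact add_le_add (lintegral_sum_range_returnTime_le hU hB h htail)
        (by gcongr; exact lintegral_returnTime_le hU hB h)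

end FirstReturn

section Invariant

open Equiv.Perm MeasurableEquiv

variable {X : Type*} [MeasurableSpace X] {μ : Measure X} {U : X ≃ᵐ X} {B : Set X}

theorem exists_invariant_subset_of_ae (hU : MeasurePreserving U μ μ) {P : X → Prop}
    (hP : ∀ᵐ x ∂μ, P x) :
    ∃ Ω, MeasurableSet Ω ∧ (∀ᵐ x ∂μ, x ∈ Ω) ∧ (∀ x ∈ Ω, ∀ m : ℤ, (U.toEquiv ^ m) x ∈ Ω) ∧
      ∀ x ∈ Ω, P x := by
  set N := toMeasurable μ {x | ¬P x}
  have hN : ∀ᵐ x ∂μ, x ∉ N := measure_eq_zero_iff_ae_notMem.1 (by rwa [measure_toMeasurable])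
  refine ⟨⋂ m : ℤ, ⇑(U.toEquiv ^ m) ⁻¹' Nᶜ,
    .iInter fun m => U.measurable_toEquiv_zpow m (measurableSet_toMeasurable _ _).compl,
    ?_, fun x hx m => ?_, fun x hx => ?_⟩
  · simp only [Set.mem_iInter]
    exact ae_all_iff.2 fun m => (measurePreserving_zpow hU m).quasiMeasurePreserving.ae hN
  · simp only [Set.mem_iInter, Set.mem_preimage] at hx ⊢
    intro k
    rw [← mul_apply, ← zpow_add]
    exact hx (k + m)
  · by_contra hPx
    exact Set.mem_iInter.1 hx 0 (by simpa using subset_toMeasurable μ _ hPx)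

theorem ae_mem_imp_exists_pow_apply_mem [IsFiniteMeasure μ] (hU : MeasurePreserving U μ μ)
    (hB : MeasurableSet B) : ∀ᵐ x ∂μ, x ∈ B → ∃ n, 0 < n ∧ (U.toEquiv ^ n) x ∈ B := by
  filter_upwards [hU.conservative.ae_mem_imp_frequently_image_mem hB.nullMeasurableSet]
    with x hx hxB
  obtain ⟨n, hnB, hn⟩ := ((hx hxB).and_eventually (eventually_gt_atTop 0)).exists
  exact ⟨n, hn, by rwa [coe_pow]⟩

/-- Poincaré recurrence, made to hold everywhere on a conull invariant set. -/
theorem exists_invariant_returnsTo_inter [IsFiniteMeasure μ] (hU : MeasurePreserving U μ μ)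
    (hB : MeasurableSet B) {P : X → Prop} (hP : ∀ᵐ x ∂μ, P x) :
    ∃ Ω, MeasurableSet Ω ∧ (∀ᵐ x ∂μ, x ∈ Ω) ∧ (∀ x ∈ Ω, ∀ m : ℤ, (U.toEquiv ^ m) x ∈ Ω) ∧
      (∀ x ∈ Ω, P x) ∧ ReturnsTo U.toEquiv (B ∩ Ω) ∧ ReturnsTo U.symm.toEquiv (B ∩ Ω) := by
  obtain ⟨Ω, hΩm, hΩ, hinv, hgood⟩ := exists_invariant_subset_of_ae hU
    (hP.and ((ae_mem_imp_exists_pow_apply_mem hU hB).and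
      (ae_mem_imp_exists_pow_apply_mem (MeasurePreserving.symm U hU) hB)))
  have hinv' : ∀ x ∈ Ω, ∀ m : ℤ, (U.symm.toEquiv ^ m) x ∈ Ω := fun x hx m => by
    rw [show U.symm.toEquiv = U.toEquiv⁻¹ from rfl, inv_zpow']
    exact hinv x hx (-m)
  refine ⟨Ω, hΩm, hΩ, hinv, fun x hx => (hgood x hx).1, fun x hx => ?_, fun x hx => ?_⟩
  · obtain ⟨n, hn, hnB⟩ := (hgood x hx.2).2.1 hx.1
    exact ⟨n, hn, hnB, by simpa using hinv x hx.2 n⟩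
  · obtain ⟨n, hn, hnB⟩ := (hgood x hx.2).2.2 hx.1
    exact ⟨n, hn, hnB, by simpa using hinv' x hx.2 n⟩

variable {Ω : Set X}

theorem isFirstReturnMap_firstReturnEquiv_inter (hΩ : ∀ᵐ x ∂μ, x ∈ Ω)
    (hinv : ∀ x ∈ Ω, ∀ m : ℤ, (U.toEquiv ^ m) x ∈ Ω) (hBΩ : MeasurableSet (B ∩ Ω))
    (h₁ : ReturnsTo U.toEquiv (B ∩ Ω)) (h₂ : ReturnsTo U.symm.toEquiv (B ∩ Ω)) :
    IsFirstReturnMap μ U (firstReturnEquiv U hBΩ h₁ h₂) B := by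
  filter_upwards [hΩ] with x hx
  refine ⟨fun hxB => ?_, fun hxB => firstReturn_of_notMem fun h => hxB h.1⟩
  obtain ⟨hpos, hmem⟩ := h₁.returnTime_pos ⟨hxB, hx⟩
  exact ⟨_, hpos, hmem.1, fun m hm hlt hmB =>
    notMem_of_lt_returnTime hm hlt ⟨hmB, by simpa using hinv x hx m⟩, rfl⟩

end Invariant

section Main

open Equiv.Perm MeasurableEquiv

variable {X : Type*} [MeasurableSpace X] {μ : Measure X} [IsProbabilityMeasure μ]
  {U : X ≃ᵐ X} {B : Set X}

theorem exists_isFirstReturnMap_lintegral_le {φ : ℝ≥0 → ℝ≥0} (hφ : MetricCompatible φ)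
    (hU : MeasurePreserving U μ μ) {T : X ≃ᵐ X} {cU : X → ℤ} (hcU : Measurable cU)
    (hUcoc : ∀ᵐ x ∂μ, U x = (T.toEquiv ^ cU x) x) (hB : MeasurableSet B) :
    ∃ (V : X ≃ᵐ X) (c : X → ℤ), MeasurePreserving V μ μ ∧ IsFirstReturnMap μ U V B ∧
      Measurable c ∧ (∀ᵐ x ∂μ, V x = (T.toEquiv ^ c x) x) ∧
      ∀ (M : ℕ) (ε C : ℝ≥0), (∀ t, φ t ≤ ε * t + C) →
        ∫⁻ x, (φ (c x).natAbs : ℝ≥0∞) ∂μ ≤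
          ∫⁻ x, (tailPart φ M (cU x) : ℝ≥0∞) ∂μ + ε * M + C * μ B := by
  obtain ⟨Ω, hΩm, hΩ, hinv, -, h₁, h₂⟩ :=
    exists_invariant_returnsTo_inter (P := fun _ => True) hU hB (by simp)
  have hBΩ := hB.inter hΩm
  refine ⟨firstReturnEquiv U hBΩ h₁ h₂, _, measurePreserving_firstReturnEquiv hU hBΩ h₁ h₂,
    isFirstReturnMap_firstReturnEquiv_inter hΩ hinv hBΩ h₁ h₂,
    measurable_birkhoffSum_returnTime hBΩ h₁ hcU, ae_firstReturn_eq_zpow_birkhoffSum hU hUcoc,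
    fun M ε C hC => ?_⟩
  refine (lintegral_birkhoffSum_returnTime_le hφ hU hBΩ h₁ hcU M hC).trans ?_
  rw [measure_univ, mul_one]
  gcongr
  exact Set.inter_subset_left

theorem exists_subset_ae_exists_zpow_mem_measure_le
    [MeasurableSpace.CountablySeparated X] (hU : MeasurePreserving U μ μ)
    (hapU : Aperiodic μ U) (hB : MeasurableSet B)
    (hmeets : ∀ᵐ x ∂μ, ∃ n : ℤ, (U.toEquiv ^ n) x ∈ B) :
    ∃ B' ⊆ B, MeasurableSet B' ∧ (∀ᵐ x ∂μ, ∃ n : ℤ, (U.toEquiv ^ n) x ∈ B') ∧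
      μ B' ≤ 2 / 3 * μ B := by
  obtain ⟨Ω, hΩm, hΩ, hinv, hap, h₁, h₂⟩ := exists_invariant_returnsTo_inter hU hB hapU
  have hBΩ := hB.inter hΩm
  set V := firstReturnEquiv U hBΩ h₁ h₂
  have hV : MeasurePreserving V μ μ := measurePreserving_firstReturnEquiv hU hBΩ h₁ h₂
  have hVne : ∀ x ∈ B ∩ Ω, V x ≠ x := fun x hx => by
    simpa [V, coe_firstReturnEquiv, firstReturn] using
      hap x hx.2 _ (Int.natCast_ne_zero.2 (h₁.returnTime_pos hx).1.ne')
  obtain ⟨C, hCB, hCm, hCind, hcover⟩ := V.exists_independent_subset_cover hBΩ hVne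
  refine ⟨B \ C, Set.sdiff_subset, hB.diff hCm, ?_, ?_⟩
  · filter_upwards [hmeets, hΩ] with x ⟨n, hn⟩ hx
    have hy : (U.toEquiv ^ n) x ∈ B ∩ Ω := ⟨hn, hinv x hx n⟩
    by_cases hyC : (U.toEquiv ^ n) x ∈ C
    -- `C` is independent, so the first return of `Uⁿ x ∈ C` lies outside `C`
    · refine ⟨returnTime U.toEquiv (B ∩ Ω) ((U.toEquiv ^ n) x) + n, ?_, ?_⟩ <;>
        rw [zpow_add, mul_apply, zpow_natCast]
      · exact (h₁.firstReturn_mem hy).1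
      · exact hCind _ hyC
    · exact ⟨n, hn, hyC⟩
  · have h3 : μ B ≤ 3 * μ C := calc
      μ B = μ (B ∩ Ω) := (measure_inter_conull (ae_iff.1 hΩ)).symm
      _ ≤ μ (V ⁻¹' C) + μ C + μ (V.symm ⁻¹' C) :=
        (measure_mono hcover).trans ((measure_union_le _ _).trans
          (add_le_add_left (measure_union_le _ _) _))
      _ = 3 * μ C := by
        rw [hV.measure_preimage_equiv, (MeasurePreserving.symm V hV).measure_preimage_equiv]
        ring
    exact measure_sdiff_le_two_thirds_mul (hCB.trans Set.inter_subset_left) hCm h3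

end Main

section Tail

variable {X : Type*} [MeasurableSpace X] {μ : Measure X} {φ : ℝ≥0 → ℝ≥0} {c : X → ℤ}

theorem tendsto_lintegral_tailPart (hc : Measurable c)
    (hint : ∫⁻ x, (φ (c x).natAbs : ℝ≥0∞) ∂μ ≠ ⊤) :
    Tendsto (fun M : ℕ => ∫⁻ x, (tailPart φ M (c x) : ℝ≥0∞) ∂μ) atTop (𝓝 0) := by
  have hlim := tendsto_lintegral_of_dominated_convergence (μ := μ) (f := 0)
    (fun x => (φ (c x).natAbs : ℝ≥0∞))
    (fun M => (measurable_of_countable fun a => (tailPart φ M a : ℝ≥0∞)).comp hc)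
    (fun M => ae_of_all _ fun x => by
      show (tailPart φ M (c x) : ℝ≥0∞) ≤ _
      unfold tailPart
      split_ifs <;> simp)
    hint
    (ae_of_all _ fun x => tendsto_const_nhds.congr' <|
      (eventually_ge_atTop (c x).natAbs).mono fun M hM => by simp [tailPart, not_lt.2 hM])
  simpa using hlim

theorem exists_lintegral_tailPart_add_le (hmono : Monotone φ)
    (hsub : Tendsto (fun t => φ t / t) atTop (𝓝 0)) (hc : Measurable c)
    (hint : ∫⁻ x, (φ (c x).natAbs : ℝ≥0∞) ∂μ ≠ ⊤) {δ : ℝ≥0} (hδ : 0 < δ) :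
    ∃ (M : ℕ) (ε C : ℝ≥0), (∀ t, φ t ≤ ε * t + C) ∧
      ∫⁻ x, (tailPart φ M (c x) : ℝ≥0∞) ∂μ + ε * M ≤ δ := by
  obtain ⟨M, hM⟩ := ((tendsto_lintegral_tailPart hc hint).eventually
    (gt_mem_nhds (show (0 : ℝ≥0∞) < (δ / 2 : ℝ≥0) by exact_mod_cast half_pos hδ))).exists
  have hε : 0 < δ / 2 / (M + 1) := by positivity
  obtain ⟨C, hC⟩ := exists_le_mul_add_of_tendsto_div hmono hsub hε
  have hεM : δ / 2 / (M + 1) * M ≤ δ / 2 := by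
    rw [div_mul_eq_mul_div, div_le_iff₀ (by positivity)]
    gcongr
    exact le_add_of_nonneg_right zero_le_one
  refine ⟨M, _, C, hC, ?_⟩
  calc _ ≤ ((δ / 2 : ℝ≥0) : ℝ≥0∞) + ((δ / 2 : ℝ≥0) : ℝ≥0∞) := by
        refine add_le_add hM.le ?_
        exact_mod_cast hεM
    _ = δ := by rw [← ENNReal.coe_add, add_halves]

end Tail

theorem exists_small_sets_first_return_tendsto_id_general {X : Type*} [MeasurableSpace X]
    [StandardBorelSpace X] (μ : Measure X) [IsProbabilityMeasure μ]
    (φ : ℝ≥0 → ℝ≥0) (hmc : MetricCompatible φ)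
    (hsub : Tendsto (fun t => φ t / t) atTop (nhds 0))
    (T : X ≃ᵐ X)
    (U : X ≃ᵐ X) (hU : MeasurePreserving (⇑U) μ μ) (hapU : Aperiodic μ U)
    (cU : X → ℤ) (hcU : Measurable cU) (hUcoc : ∀ᵐ x ∂μ, U x = (T.toEquiv ^ cU x) x)
    (hUint : ∫⁻ x, (φ ((cU x).natAbs : ℝ≥0) : ℝ≥0∞) ∂μ < ⊤)
    (A : Set X) (hA : MeasurableSet A)
    (hmeets : ∀ᵐ x ∂μ, ∃ n : ℤ, (U.toEquiv ^ n) x ∈ A) :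
    ∃ (As : ℕ → Set X) (Vs : ℕ → X ≃ᵐ X) (cs : ℕ → X → ℤ),
      (∀ k, MeasurableSet (As k)) ∧
      (∀ k, As k ⊆ A) ∧
      (∀ k, ∀ᵐ x ∂μ, ∃ n : ℤ, (U.toEquiv ^ n) x ∈ As k) ∧
      (∀ k, MeasurePreserving (⇑(Vs k)) μ μ) ∧
      (∀ k, IsFirstReturnMap μ U (Vs k) (As k)) ∧
      (∀ k, Measurable (cs k)) ∧
      (∀ k, ∀ᵐ x ∂μ, (Vs k) x = (T.toEquiv ^ cs k x) x) ∧
      Tendsto (fun k => μ (As k)) atTop (nhds 0) ∧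
      Tendsto (fun k => ∫⁻ x, (φ ((cs k x).natAbs : ℝ≥0) : ℝ≥0∞) ∂μ) atTop (nhds 0) := by
  obtain ⟨As, hAs, hμAs⟩ := exists_seq_tendsto_zero_of_forall_exists_le_mul
    (P := fun B => MeasurableSet B ∧ B ⊆ A ∧ ∀ᵐ x ∂μ, ∃ n : ℤ, (U.toEquiv ^ n) x ∈ B) μ
    (q := 2 / 3) (by rw [ENNReal.div_lt_iff (by norm_num) (by norm_num)]; norm_num)
    (fun B ⟨hB, hBA, hBmeets⟩ => by
      obtain ⟨B', hB'B, hB', hB'meets, hμB'⟩ :=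
        exists_subset_ae_exists_zpow_mem_measure_le hU hapU hB hBmeets
      exact ⟨B', ⟨hB', hB'B.trans hBA, hB'meets⟩, hμB'⟩)
    ⟨hA, subset_rfl, hmeets⟩ (measure_ne_top μ A)
  choose Vs cs hVs hVsret hcs hcscoc hbound using fun k =>
    exists_isFirstReturnMap_lintegral_le hmc hU hcU hUcoc (hAs k).1
  refine ⟨As, Vs, cs, fun k => (hAs k).1, fun k => (hAs k).2.1, fun k => (hAs k).2.2, hVs,
    hVsret, hcs, hcscoc, hμAs,
    ENNReal.tendsto_nhds_zero_of_forall_le_add_mul hμAs fun δ hδ => ?_⟩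
  obtain ⟨M, ε, C, hC, hsmall⟩ := exists_lintegral_tailPart_add_le hmc.2.1 hsub hcU hUint.ne hδ
  exact ⟨C, fun k => (hbound k M ε C hC).trans (add_le_add_left hsmall _)⟩

/-- For sublinear metric-compatible `φ`, aperiodic `T` and aperiodic `U ∈ [T]_φ`, and any
measurable `A` meeting a.e. `U`-orbit, there are subsets `A_k ⊆ A` meeting a.e. `U`-orbit
with `μ(A_k) → 0` and `d_{φ,T}(U_{A_k}, id) → 0`. -/
theorem exists_small_sets_first_return_tendsto_id {X : Type*} [MeasurableSpace X]
    [StandardBorelSpace X] (μ : Measure X) [IsProbabilityMeasure μ] [NullSingletonClass μ]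
    (φ : ℝ≥0 → ℝ≥0) (hmc : MetricCompatible φ)
    (hsub : Tendsto (fun t => φ t / t) atTop (nhds 0))
    (T : X ≃ᵐ X) (hT : MeasurePreserving (⇑T) μ μ) (hapT : Aperiodic μ T)
    (U : X ≃ᵐ X) (hU : MeasurePreserving (⇑U) μ μ) (hapU : Aperiodic μ U)
    (cU : X → ℤ) (hcU : Measurable cU) (hUcoc : ∀ᵐ x ∂μ, U x = (T.toEquiv ^ cU x) x)
    (hUint : ∫⁻ x, (φ ((cU x).natAbs : ℝ≥0) : ℝ≥0∞) ∂μ < ⊤)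
    (A : Set X) (hA : MeasurableSet A)
    (hmeets : ∀ᵐ x ∂μ, ∃ n : ℤ, (U.toEquiv ^ n) x ∈ A) :
    ∃ (As : ℕ → Set X) (Vs : ℕ → X ≃ᵐ X) (cs : ℕ → X → ℤ),
      (∀ k, MeasurableSet (As k)) ∧
      (∀ k, As k ⊆ A) ∧
      (∀ k, ∀ᵐ x ∂μ, ∃ n : ℤ, (U.toEquiv ^ n) x ∈ As k) ∧
      (∀ k, MeasurePreserving (⇑(Vs k)) μ μ) ∧
      (∀ k, IsFirstReturnMap μ U (Vs k) (As k)) ∧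
      (∀ k, Measurable (cs k)) ∧
      (∀ k, ∀ᵐ x ∂μ, (Vs k) x = (T.toEquiv ^ cs k x) x) ∧
      Tendsto (fun k => μ (As k)) atTop (nhds 0) ∧
      Tendsto (fun k => ∫⁻ x, (φ ((cs k x).natAbs : ℝ≥0) : ℝ≥0∞) ∂μ) atTop (nhds 0) :=
  exists_small_sets_first_return_tendsto_id_general μ φ hmc hsub T U hU hapU cU hcU hUcoc hUint A hA
    hmeets
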